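/- Let 1 ≤ s ≤ n and let b = B(n,n−s). Then n!/b ≤ f(n,s) ≤ H_b · n!/b, where H_b = 1 + 1/2 + ⋯ + 1/b is the b-th harmonic number. -/
import Mathlib

open Finset

/-- Hamming distance between two permutations of `Fin n`:
the number of points where they disagree. -/
def permHammingDist {n : ℕ} (ρ σ : Equiv.Perm (Fin n)) : ℕ :=
  (Finset.univ.filter (fun i => ρ i ≠ σ i)).card

/-- `covers S r` means the set `S` of permutations has covering radius at most `r`. -/
def covers {n : ℕ} (S : Finset (Equiv.Perm (Fin n))) (r : ℕ) : Prop :=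
  ∀ ρ : Equiv.Perm (Fin n), ∃ σ ∈ S, permHammingDist ρ σ ≤ r

/-- `f n s` is the minimum size of a subset of `S_n` with covering radius at most `n - s`. -/
noncomputable def f (n s : ℕ) : ℕ :=
  sInf {k | ∃ S : Finset (Equiv.Perm (Fin n)), S.card = k ∧ covers S (n - s)}

/-- `ballCard n k` is the number of permutations of `Fin n` within Hamming distance `k`
of the identity permutation. -/
noncomputable def ballCard (n k : ℕ) : ℕ :=
  (Finset.univ.filter (fun σ : Equiv.Perm (Fin n) => permHammingDist σ 1 ≤ k)).card

/-! ### Auxiliary material -/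

noncomputable def Hsum (k : ℕ) : ℝ := ∑ i ∈ Finset.range k, (1:ℝ)/(i+1)

lemma Hsum_nonneg (k : ℕ) : 0 ≤ Hsum k :=
  Finset.sum_nonneg fun i _ => by positivity

lemma Hsum_diff {c a : ℕ} (h : c ≤ a) (ha : 0 < a) :
    ((a:ℝ) - c)/a ≤ Hsum a - Hsum c := by
  have hab : Hsum a - Hsum c = ∑ i ∈ Finset.Ico c a, (1:ℝ)/(i+1) := by
    rw [Hsum, Hsum, Finset.sum_Ico_eq_sub _ h]
  rw [hab]
  have h1 : ∀ i ∈ Finset.Ico c a, (1:ℝ)/a ≤ 1/(i+1) := by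
    intro i hi
    have hi2 := (Finset.mem_Ico.mp hi).2
    apply one_div_le_one_div_of_le (by positivity)
    exact_mod_cast Nat.succ_le_of_lt hi2
  have h2 := Finset.card_nsmul_le_sum (Finset.Ico c a) (fun i => (1:ℝ)/(i+1)) ((1:ℝ)/a) h1
  calc ((a:ℝ) - c)/a = (Finset.Ico c a).card • ((1:ℝ)/a) := by
        rw [Nat.card_Ico, nsmul_eq_mul]
        rw [Nat.cast_sub h]
        ring
    _ ≤ ∑ i ∈ Finset.Ico c a, (1:ℝ)/(i+1) := h2

/-- Greedy covering bound for a regular symmetric set system. -/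
lemma greedy {α : Type*} [Fintype α] [DecidableEq α] (B : α → Finset α)
    (hsym : ∀ x y, x ∈ B y ↔ y ∈ B x) (hrefl : ∀ x, x ∈ B x)
    (b : ℕ) (hcard : ∀ y, (B y).card = b) :
    ∀ (N : ℕ) (U : Finset α), U.card ≤ N →
      ∃ S : Finset α, (∀ x ∈ U, ∃ y ∈ S, x ∈ B y) ∧
        (S.card : ℝ) * b ≤ ∑ y : α, Hsum ((B y ∩ U).card) := by
  have key : ∀ V : Finset α, ∑ y : α, ((B y ∩ V).card) = b * V.card := by
    intro V
    have step : ∀ y : α, (B y ∩ V).card = ∑ x ∈ V, if x ∈ B y then 1 else 0 := by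
      intro y
      rw [← Finset.card_filter]
      congr 1
      rw [Finset.filter_mem_eq_inter, Finset.inter_comm]
    calc ∑ y : α, ((B y ∩ V).card) = ∑ y : α, ∑ x ∈ V, if x ∈ B y then 1 else 0 :=
          Finset.sum_congr rfl fun y _ => step y
      _ = ∑ x ∈ V, ∑ y : α, if x ∈ B y then 1 else 0 := Finset.sum_comm
      _ = ∑ x ∈ V, (Finset.univ.filter (fun y => x ∈ B y)).card := by
          refine Finset.sum_congr rfl fun x _ => ?_
          rw [Finset.card_filter]
      _ = ∑ x ∈ V, b := by
          refine Finset.sum_congr rfl fun x _ => ?_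
          have : Finset.univ.filter (fun y => x ∈ B y) = B x := by
            ext y; simp [hsym x y]
          rw [this, hcard]
      _ = b * V.card := by rw [Finset.sum_const, smul_eq_mul, Nat.mul_comm]
  intro N
  induction N with
  | zero =>
      intro U hU
      have : U = ∅ := Finset.card_eq_zero.mp (Nat.le_zero.mp hU)
      subst this
      exact ⟨∅, by simp, by simp [Hsum]⟩
  | succ N ih =>
      intro U hU
      rcases Finset.eq_empty_or_nonempty U with rfl | hUne
      · exact ⟨∅, by simp, by simp [Hsum]⟩
      obtain ⟨x0, hx0⟩ := hUne
      obtain ⟨y0, -, hy0⟩ := Finset.exists_max_image Finset.univ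
        (fun y => (B y ∩ U).card) ⟨x0, Finset.mem_univ x0⟩
      set m := (B y0 ∩ U).card with hm
      have hm1 : 1 ≤ m := by
        have hx : x0 ∈ B x0 ∩ U := Finset.mem_inter.mpr ⟨hrefl x0, hx0⟩
        have := hy0 x0 (Finset.mem_univ x0)
        exact le_trans (Finset.card_pos.mpr ⟨x0, hx⟩) this
      set U' := U \ B y0 with hU'def
      have hUsplit : U' = U \ (B y0 ∩ U) := by
        rw [hU'def, Finset.inter_comm, Finset.sdiff_inter_self_left]
      have hU'card : U'.card = U.card - m := by
        rw [hUsplit, Finset.card_sdiff_of_subset Finset.inter_subset_right]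
      have hmle : m ≤ U.card := Finset.card_le_card Finset.inter_subset_right
      have hU'le : U'.card ≤ N := by omega
      obtain ⟨S', hS'cov, hS'⟩ := ih U' hU'le
      refine ⟨insert y0 S', ?_, ?_⟩
      · intro x hx
        by_cases hxB : x ∈ B y0
        · exact ⟨y0, Finset.mem_insert_self _ _, hxB⟩
        · obtain ⟨y, hy, hxy⟩ := hS'cov x (Finset.mem_sdiff.mpr ⟨hx, hxB⟩)
          exact ⟨y, Finset.mem_insert_of_mem hy, hxy⟩
      · have hbpos : 0 < b := by
          rw [← hcard y0]; exact Finset.card_pos.mpr ⟨y0, hrefl y0⟩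
        have hmain : (b:ℝ) + ∑ y : α, Hsum ((B y ∩ U').card)
            ≤ ∑ y : α, Hsum ((B y ∩ U).card) := by
          have hterm : ∀ y : α, ((B y ∩ U).card - (B y ∩ U').card : ℝ)/m
              ≤ Hsum ((B y ∩ U).card) - Hsum ((B y ∩ U').card) := by
            intro y
            have hsubset : B y ∩ U' ⊆ B y ∩ U :=
              Finset.inter_subset_inter (le_refl _) Finset.sdiff_subset
            have hcle : (B y ∩ U').card ≤ (B y ∩ U).card := Finset.card_le_card hsubset
            rcases Nat.eq_zero_or_pos (B y ∩ U).card with hz | hp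
            · have hz' : (B y ∩ U').card = 0 := by omega
              rw [hz, hz']; simp
            · have hlem : (B y ∩ U).card ≤ m := hy0 y (Finset.mem_univ y)
              have h1 : ((B y ∩ U).card - (B y ∩ U').card : ℝ)/m
                  ≤ ((B y ∩ U).card - (B y ∩ U').card : ℝ)/(B y ∩ U).card := by
                apply div_le_div_of_nonneg_left _ (by exact_mod_cast hp)
                  (by exact_mod_cast hlem)
                have : ((B y ∩ U').card : ℝ) ≤ (B y ∩ U).card := by exact_mod_cast hcle
                linarith
              exact le_trans h1 (Hsum_diff hcle hp)
          have hsum := Finset.sum_le_sum (fun y (_ : y ∈ Finset.univ) => hterm y)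
          have hLHS : ∑ y : α, ((B y ∩ U).card - (B y ∩ U').card : ℝ)/m = b := by
            have e1 : ∑ y : α, ((B y ∩ U).card - (B y ∩ U').card : ℝ)/m
                = ((∑ y : α, ((B y ∩ U).card : ℝ)) - ∑ y : α, ((B y ∩ U').card : ℝ))/m := by
              rw [← Finset.sum_sub_distrib, Finset.sum_div]
            have e2 : ∑ y : α, ((B y ∩ U).card : ℝ) = (b : ℝ) * U.card := by
              exact_mod_cast congrArg (Nat.cast : ℕ → ℝ) (key U)
            have e3 : ∑ y : α, ((B y ∩ U').card : ℝ) = (b : ℝ) * U'.card := by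
              exact_mod_cast congrArg (Nat.cast : ℕ → ℝ) (key U')
            have e4 : (U'.card : ℝ) = U.card - m := by
              rw [hU'card]; push_cast [Nat.cast_sub hmle]; ring
            rw [e1, e2, e3, e4]
            have hmne : (m : ℝ) ≠ 0 := by positivity
            field_simp
            ring
          rw [hLHS, Finset.sum_sub_distrib] at hsum
          linarith
        have hins : ((insert y0 S').card : ℝ) ≤ S'.card + 1 := by
          exact_mod_cast Finset.card_insert_le y0 S'
        have : ((insert y0 S').card : ℝ) * b ≤ (S'.card + 1) * b := by
          apply mul_le_mul_of_nonneg_right hins (by positivity)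
        calc ((insert y0 S').card : ℝ) * b ≤ (S'.card + 1) * b := this
          _ = S'.card * b + b := by ring
          _ ≤ (∑ y : α, Hsum ((B y ∩ U').card)) + b := by linarith
          _ ≤ ∑ y : α, Hsum ((B y ∩ U).card) := by linarith

lemma permDist_mul_left {n : ℕ} (τ ρ σ : Equiv.Perm (Fin n)) :
    permHammingDist (τ * ρ) (τ * σ) = permHammingDist ρ σ := by
  unfold permHammingDist
  congr 1
  apply Finset.filter_congr
  intro i _
  simp [Equiv.Perm.mul_apply, EmbeddingLike.apply_eq_iff_eq]

lemma ball_card {n : ℕ} (r : ℕ) (σ : Equiv.Perm (Fin n)) :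
    (Finset.univ.filter (fun ρ : Equiv.Perm (Fin n) => permHammingDist ρ σ ≤ r)).card
      = ballCard n r := by
  rw [ballCard]
  apply Finset.card_bij' (fun ρ _ => σ⁻¹ * ρ) (fun ρ _ => σ * ρ)
  · intro ρ hρ
    simp only [Finset.mem_filter, Finset.mem_univ, true_and] at hρ ⊢
    have : permHammingDist (σ⁻¹ * ρ) 1 = permHammingDist ρ σ := by
      have h1 : (1 : Equiv.Perm (Fin n)) = σ⁻¹ * σ := by group
      rw [h1, permDist_mul_left]
    rw [this]; exact hρ
  · intro ρ hρ
    simp only [Finset.mem_filter, Finset.mem_univ, true_and] at hρ ⊢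
    have : permHammingDist (σ * ρ) σ = permHammingDist ρ 1 := by
      nth_rewrite 2 [show σ = σ * 1 by group]
      rw [permDist_mul_left]
    rw [this]; exact hρ
  · intro ρ _; group
  · intro ρ _; group

theorem stmt5 (n s : ℕ) (hs1 : 1 ≤ s) (hs2 : s ≤ n) (b : ℕ)
    (hb : b = ballCard n (n - s)) :
    (n.factorial : ℝ) / b ≤ f n s ∧
      (f n s : ℝ) ≤ (∑ i ∈ Finset.range b, (1 : ℝ) / (i + 1)) * n.factorial / b := by
  classical
  set r := n - s with hr
  set B : Equiv.Perm (Fin n) → Finset (Equiv.Perm (Fin n)) :=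
    fun σ => Finset.univ.filter (fun ρ => permHammingDist ρ σ ≤ r) with hBdef
  have hmem : ∀ x y : Equiv.Perm (Fin n), x ∈ B y ↔ permHammingDist x y ≤ r := by
    intro x y; simp [hBdef]
  have hdistsym : ∀ x y : Equiv.Perm (Fin n), permHammingDist x y = permHammingDist y x := by
    intro x y
    unfold permHammingDist
    congr 1
    apply Finset.filter_congr
    intro i _
    simp [ne_comm]
  have hsym : ∀ x y : Equiv.Perm (Fin n), x ∈ B y ↔ y ∈ B x := by
    intro x y; rw [hmem, hmem, hdistsym]
  have hrefl : ∀ x : Equiv.Perm (Fin n), x ∈ B x := by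
    intro x; rw [hmem]
    have : permHammingDist x x = 0 := by
      unfold permHammingDist; simp
    omega
  have hcard : ∀ y : Equiv.Perm (Fin n), (B y).card = b := by
    intro y; rw [hBdef]; rw [ball_card r y, hb]
  have hbpos : 0 < b := by
    rw [← hcard 1]; exact Finset.card_pos.mpr ⟨1, hrefl 1⟩
  have hN : Fintype.card (Equiv.Perm (Fin n)) = n.factorial := by
    rw [Fintype.card_perm, Fintype.card_fin]
  -- greedy upper bound
  obtain ⟨S, hScov, hSbd⟩ := greedy B hsym hrefl b hcard
    (Finset.univ.card) Finset.univ le_rfl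
  have hScovers : covers S r := by
    intro ρ
    obtain ⟨y, hy, hxy⟩ := hScov ρ (Finset.mem_univ ρ)
    exact ⟨y, hy, (hmem ρ y).mp hxy⟩
  have hfmem : f n s ∈ {k | ∃ T : Finset (Equiv.Perm (Fin n)), T.card = k ∧ covers T (n - s)} :=
    Nat.sInf_mem ⟨S.card, S, rfl, hScovers⟩
  obtain ⟨T, hTcard, hTcov⟩ := hfmem
  have hfle : f n s ≤ S.card := Nat.sInf_le ⟨S, rfl, hScovers⟩
  constructor
  · -- lower bound
    have hsub : (Finset.univ : Finset (Equiv.Perm (Fin n))) ⊆ T.biUnion B := by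
      intro ρ _
      obtain ⟨σ, hσ, hd⟩ := hTcov ρ
      exact Finset.mem_biUnion.mpr ⟨σ, hσ, (hmem ρ σ).mpr hd⟩
    have h1 : n.factorial ≤ T.card * b := by
      calc n.factorial = (Finset.univ : Finset (Equiv.Perm (Fin n))).card := by
            rw [Finset.card_univ, hN]
        _ ≤ (T.biUnion B).card := Finset.card_le_card hsub
        _ ≤ ∑ σ ∈ T, (B σ).card := Finset.card_biUnion_le
        _ = T.card * b := by
            rw [Finset.sum_congr rfl fun σ _ => hcard σ, Finset.sum_const, smul_eq_mul]
    rw [div_le_iff₀ (by exact_mod_cast hbpos)]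
    rw [← hTcard]
    exact_mod_cast h1
  · -- upper bound
    have hsum : ∑ y : Equiv.Perm (Fin n), Hsum ((B y ∩ Finset.univ).card)
        = (n.factorial : ℝ) * Hsum b := by
      have : ∀ y : Equiv.Perm (Fin n), Hsum ((B y ∩ Finset.univ).card) = Hsum b := by
        intro y; rw [Finset.inter_univ, hcard]
      rw [Finset.sum_congr rfl fun y _ => this y, Finset.sum_const, Finset.card_univ,
        hN, nsmul_eq_mul]
    rw [hsum] at hSbd
    have hfS : (f n s : ℝ) ≤ S.card := by exact_mod_cast hfle
    have hSle : (S.card : ℝ) ≤ (n.factorial : ℝ) * Hsum b / b := by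
      rw [le_div_iff₀ (by exact_mod_cast hbpos)]
      linarith
    calc (f n s : ℝ) ≤ S.card := hfS
      _ ≤ (n.factorial : ℝ) * Hsum b / b := hSle
      _ = (∑ i ∈ Finset.range b, (1 : ℝ) / (i + 1)) * n.factorial / b := by
          rw [Hsum]; ring
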